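/- Let V be a partial isometry on a complex Hilbert space H, and on K = H × H let ε_V be the selfadjoint operator ε_V(ξ,η) = (Vη, V*ξ). Let 𝐀 ∈ B(K) be a diagonal selfadjoint operator, i.e. 𝐀(ξ,η) = (A₁ξ, A₂η) with A₁, A₂ ∈ B(H) selfadjoint. Suppose 𝐗 ∈ B(K) is selfadjoint, commutes with ε_V, and satisfies ‖𝐀 + 𝐗‖ ≤ ‖𝐀 + 𝐘‖ for every selfadjoint 𝐘 ∈ B(K) commuting with ε_V. Let P ∈ B(K) be the orthogonal projection onto H × {0}, and set 𝐗₀ = P𝐗P + (1−P)𝐗(1−P). Then 𝐗₀ is selfadjoint, 𝐗₀ commutes with ε_V, and ‖𝐀 + 𝐗₀‖ ≤ ‖𝐀 + 𝐙‖ for every diagonal selfadjoint 𝐙 ∈ B(K) (𝐙(ξ,η) = (Z₁ξ, Z₂η) with Z₁, Z₂ selfadjoint) satisfying Z₁V = VZ₂. -/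

import Mathlib

/-!
Compressing by the projection `P` onto `H × {0}` is the pinching
`T ↦ PTP + (1 - P)T(1 - P) = (T + UTU) / 2` with the selfadjoint unitary `U = 2P - 1`,
so it does not increase norms. Since `A` is diagonal, the pinching of `A + X` is `A + X₀`,
and since `ε_V` interchanges the two summands of `K`, pinching preserves commutation with
`ε_V`. Finally, a diagonal selfadjoint `Z` with `Z₁V = VZ₂` also satisfies `Z₂V* = V*Z₁`,
hence commutes with `ε_V` and competes in the minimality of `X`:
`‖A + X₀‖ ≤ ‖A + X‖ ≤ ‖A + Z‖`.
-/

variable {H : Type*} [NormedAddCommGroup H] [InnerProductSpace ℂ H] [CompleteSpace H]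

local notation "K" => WithLp 2 (H × H)

/-- The identification of the pair `(ξ, η)` with an element of the Hilbert space
`K = H × H` carrying the sum inner product (`WithLp 2 (H × H)`). -/
noncomputable def toK {H : Type*} [NormedAddCommGroup H] [InnerProductSpace ℂ H] (x : H × H) :
    WithLp 2 (H × H) := (WithLp.equiv 2 (H × H)).symm x

section Pinching

variable {R : Type*}

def pinching [Ring R] (p x : R) : R := p * x * p + (1 - p) * x * (1 - p)

section Ring

variable [Ring R] {p x e : R}

theorem pinching_add (p x y : R) : pinching p (x + y) = pinching p x + pinching p y := by
  unfold pinching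
  noncomm_ring

theorem pinching_eq_self_of_commute (hp : IsIdempotentElem p) (hx : Commute x p) :
    pinching p x = x := by
  have hq : Commute x (1 - p) := (Commute.one_right x).sub_right hx
  calc pinching p x = x * (p * p) + x * ((1 - p) * (1 - p)) := by
        rw [pinching, ← hx.eq, ← hq.eq, mul_assoc, mul_assoc]
    _ = x := by rw [hp.eq, hp.one_sub.eq, ← mul_add, add_sub_cancel, mul_one]

theorem commute_pinching (hp : p * e = e * (1 - p)) (hx : Commute x e) :
    Commute (pinching p x) e := by
  have hp' : SemiconjBy e (1 - p) p := hp.symm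
  have hq : SemiconjBy e p (1 - p) := by
    simpa only [sub_sub_cancel] using (SemiconjBy.one_right e).sub_right hp'
  have h := ((hp'.mul_right hx.symm).mul_right hp').add_right ((hq.mul_right hx.symm).mul_right hq)
  rw [commute_iff_eq, pinching, ← h.eq, add_comm]

theorem two_nsmul_pinching (p x : R) :
    2 • pinching p x = x + (2 * p - 1) * x * (2 * p - 1) := by
  unfold pinching
  noncomm_ring

end Ring

theorem IsSelfAdjoint.pinching [Ring R] [StarRing R] {p x : R} (hx : IsSelfAdjoint x)
    (hp : IsSelfAdjoint p) : IsSelfAdjoint (pinching p x) :=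
  (hx.conjugate_self hp).add (hx.conjugate_self ((IsSelfAdjoint.one R).sub hp))

theorem norm_pinching_le [NormedRing R] [StarRing R] [CStarRing R] [NormedSpace ℝ R] {p : R}
    (hp : IsStarProjection p) (x : R) : ‖pinching p x‖ ≤ ‖x‖ := by
  have hu := hp.two_mul_sub_one_mem_unitary
  have h2 : 2 * ‖pinching p x‖ ≤ 2 * ‖x‖ :=
    calc 2 * ‖pinching p x‖ = ‖2 • pinching p x‖ := by
          rw [RCLike.norm_nsmul ℝ, nsmul_eq_mul, Nat.cast_ofNat]
      _ ≤ ‖x‖ + ‖(2 * p - 1) * x * (2 * p - 1)‖ := by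
          rw [two_nsmul_pinching]
          exact norm_add_le _ _
      _ = 2 * ‖x‖ := by
        rw [CStarRing.norm_mul_mem_unitary _ hu, CStarRing.norm_mem_unitary_mul _ hu, two_mul]
  linarith

end Pinching

section BlockOperators

variable {E : Type*} [NormedAddCommGroup E] [InnerProductSpace ℂ E]
  {Z W P ε : WithLp 2 (E × E) →L[ℂ] WithLp 2 (E × E)}
  {Z₁ Z₂ W₁ W₂ B C : E →L[ℂ] E}

def IsBlockDiag (Z : WithLp 2 (E × E) →L[ℂ] WithLp 2 (E × E)) (Z₁ Z₂ : E →L[ℂ] E) :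
    Prop :=
  ∀ ξ η : E, Z (toK (ξ, η)) = toK (Z₁ ξ, Z₂ η)

def IsBlockAntidiag (ε : WithLp 2 (E × E) →L[ℂ] WithLp 2 (E × E)) (B C : E →L[ℂ] E) :
    Prop :=
  ∀ ξ η : E, ε (toK (ξ, η)) = toK (B η, C ξ)

theorem ext_toK (h : ∀ ξ η : E, Z (toK (ξ, η)) = W (toK (ξ, η))) : Z = W :=
  ContinuousLinearMap.ext fun x => h x.fst x.snd

namespace IsBlockDiag

theorem eq (hZ : IsBlockDiag Z Z₁ Z₂) (hW : IsBlockDiag W Z₁ Z₂) : Z = W :=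
  ext_toK fun ξ η => by rw [hZ, hW]

theorem mul (hZ : IsBlockDiag Z Z₁ Z₂) (hW : IsBlockDiag W W₁ W₂) :
    IsBlockDiag (Z * W) (Z₁ * W₁) (Z₂ * W₂) := fun ξ η => by
  rw [mul_apply_eq_comp, hW, hZ, mul_apply_eq_comp, mul_apply_eq_comp]

theorem commute (hZ : IsBlockDiag Z Z₁ Z₂) (hW : IsBlockDiag W W₁ W₂)
    (h₁ : Commute Z₁ W₁) (h₂ : Commute Z₂ W₂) : Commute Z W :=
  (hZ.mul hW).eq (by rw [h₁.eq, h₂.eq]; exact hW.mul hZ)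

theorem isSelfAdjoint [CompleteSpace E] (hZ : IsBlockDiag Z Z₁ Z₂) (h₁ : IsSelfAdjoint Z₁)
    (h₂ : IsSelfAdjoint Z₂) : IsSelfAdjoint Z := by
  rw [ContinuousLinearMap.isSelfAdjoint_iff_isSymmetric] at h₁ h₂ ⊢
  intro x y
  change inner ℂ (Z (toK (x.fst, x.snd))) (toK (y.fst, y.snd))
    = inner ℂ (toK (x.fst, x.snd)) (Z (toK (y.fst, y.snd)))
  rw [hZ, hZ]
  exact congrArg₂ (· + ·) (h₁ x.fst y.fst) (h₂ x.snd y.snd)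

theorem commute_of_isBlockAntidiag (hZ : IsBlockDiag Z Z₁ Z₂) (hε : IsBlockAntidiag ε B C)
    (hB : Z₁ * B = B * Z₂) (hC : Z₂ * C = C * Z₁) : Commute Z ε :=
  ext_toK fun ξ η => by
    have hBη := DFunLike.congr_fun hB η
    have hCξ := DFunLike.congr_fun hC ξ
    simp only [mul_apply_eq_comp] at hBη hCξ ⊢
    rw [hε, hZ, hZ, hε, hBη, hCξ]

end IsBlockDiag

theorem isStarProjection_of_isBlockDiag_one_zero [CompleteSpace E] (hP : IsBlockDiag P 1 0) :
    IsStarProjection P where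
  isIdempotentElem := (hP.mul hP).eq (by simpa only [mul_one, mul_zero] using hP)
  isSelfAdjoint := hP.isSelfAdjoint (.one _) (.zero _)

theorem IsBlockAntidiag.mul_eq_mul_one_sub (hε : IsBlockAntidiag ε B C)
    (hP : IsBlockDiag P 1 0) : P * ε = ε * (1 - P) :=
  ext_toK fun ξ η => by
    have h1P : (1 - P) (toK (ξ, η)) = toK (0, η) := by
      rw [sub_apply, hP]
      change toK ((ξ, η) - ((1 : E →L[ℂ] E) ξ, (0 : E →L[ℂ] E) η)) = _
      simp
    rw [mul_apply_eq_comp, mul_apply_eq_comp, hε, h1P, hP, hε]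
    simp

end BlockOperators

theorem diagonal_minimal_lifting_general
    (V : H →L[ℂ] H)
    (ε A X P : K →L[ℂ] K)
    (hε : ∀ ξ η : H, ε (toK (ξ, η)) = toK (V η, star V ξ))
    (A₁ A₂ : H →L[ℂ] H)
    (hA : ∀ ξ η : H, A (toK (ξ, η)) = toK (A₁ ξ, A₂ η))
    (hX : IsSelfAdjoint X) (hXcomm : X * ε = ε * X)
    (hXmin : ∀ Y : K →L[ℂ] K, IsSelfAdjoint Y → Y * ε = ε * Y → ‖A + X‖ ≤ ‖A + Y‖)
    (hP : ∀ ξ η : H, P (toK (ξ, η)) = toK (ξ, 0)) :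
    IsSelfAdjoint (P * X * P + (1 - P) * X * (1 - P)) ∧
    (P * X * P + (1 - P) * X * (1 - P)) * ε = ε * (P * X * P + (1 - P) * X * (1 - P)) ∧
    ∀ (Z : K →L[ℂ] K) (Z₁ Z₂ : H →L[ℂ] H), IsSelfAdjoint Z₁ → IsSelfAdjoint Z₂ →
      (∀ ξ η : H, Z (toK (ξ, η)) = toK (Z₁ ξ, Z₂ η)) → Z₁ * V = V * Z₂ →
      ‖A + (P * X * P + (1 - P) * X * (1 - P))‖ ≤ ‖A + Z‖ := by
  have hPdiag : IsBlockDiag P 1 0 := hP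
  have hPproj := isStarProjection_of_isBlockDiag_one_zero hPdiag
  have hεP : P * ε = ε * (1 - P) := IsBlockAntidiag.mul_eq_mul_one_sub hε hPdiag
  refine ⟨hX.pinching hPproj.isSelfAdjoint, commute_pinching hεP hXcomm, ?_⟩
  intro Z Z₁ Z₂ hZ₁ hZ₂ hZ hZV
  have hZV' : Z₂ * star V = star V * Z₁ := by
    simpa only [star_mul, hZ₁.star_eq, hZ₂.star_eq] using (congrArg star hZV).symm
  have hAP : Commute A P :=
    IsBlockDiag.commute hA hPdiag (.one_right _) (.zero_right _)
  calc ‖A + pinching P X‖ = ‖pinching P (A + X)‖ := by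
        rw [pinching_add, pinching_eq_self_of_commute hPproj.isIdempotentElem hAP]
    _ ≤ ‖A + X‖ := norm_pinching_le hPproj _
    _ ≤ ‖A + Z‖ :=
      hXmin Z (IsBlockDiag.isSelfAdjoint hZ hZ₁ hZ₂)
        (IsBlockDiag.commute_of_isBlockAntidiag hZ hε hZV hZV')

/-- Let `V` be a partial isometry on `H`, `ε = ε_V` the selfadjoint
operator on `K = H × H` given by `ε(ξ,η) = (Vη, V*ξ)`, `A` a diagonal selfadjoint
operator on `K`, and `X` a selfadjoint operator commuting with `ε` which minimizes
`‖A + ·‖` among all selfadjoint operators commuting with `ε`.  If `P` is the orthogonal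
projection onto `H × {0}` and `X₀ = PXP + (1−P)X(1−P)`, then `X₀` is selfadjoint,
commutes with `ε`, and `‖A + X₀‖ ≤ ‖A + Z‖` for every diagonal selfadjoint
`Z = Z₁ ⊕ Z₂` with `Z₁V = VZ₂`. -/
theorem diagonal_minimal_lifting
    (V : H →L[ℂ] H) (hV : V * star V * V = V)
    (ε A X P : K →L[ℂ] K)
    (hε : ∀ ξ η : H, ε (toK (ξ, η)) = toK (V η, star V ξ))
    (A₁ A₂ : H →L[ℂ] H) (hA₁ : IsSelfAdjoint A₁) (hA₂ : IsSelfAdjoint A₂)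
    (hA : ∀ ξ η : H, A (toK (ξ, η)) = toK (A₁ ξ, A₂ η))
    (hX : IsSelfAdjoint X) (hXcomm : X * ε = ε * X)
    (hXmin : ∀ Y : K →L[ℂ] K, IsSelfAdjoint Y → Y * ε = ε * Y → ‖A + X‖ ≤ ‖A + Y‖)
    (hP : ∀ ξ η : H, P (toK (ξ, η)) = toK (ξ, 0)) :
    IsSelfAdjoint (P * X * P + (1 - P) * X * (1 - P)) ∧
    (P * X * P + (1 - P) * X * (1 - P)) * ε = ε * (P * X * P + (1 - P) * X * (1 - P)) ∧
    ∀ (Z : K →L[ℂ] K) (Z₁ Z₂ : H →L[ℂ] H), IsSelfAdjoint Z₁ → IsSelfAdjoint Z₂ →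
      (∀ ξ η : H, Z (toK (ξ, η)) = toK (Z₁ ξ, Z₂ η)) → Z₁ * V = V * Z₂ →
      ‖A + (P * X * P + (1 - P) * X * (1 - P))‖ ≤ ‖A + Z‖ :=
  diagonal_minimal_lifting_general V ε A X P hε A₁ A₂ hA hX hXcomm hXmin hP
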